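/- arXiv:1507.00249 — 2 statements merged into one kernel-verified Lean document; each statement's English description precedes it below -/
import Mathlib

section
/- Let σ be an abundant skew shape with height a and width b, i.e., a connected skew shape each of whose northwest corners occurs on or above its main anti-diagonal and each of whose southeast corners occurs on or below it (equivalently, δ(c) ≥ 0 for all c ∈ C(σ)). Then for every toggle-symmetric probability distribution μ on J(σ), the expected jaggedness of a μ-random subshape is at least 2ab/(a+b). -/
open Finset
open scoped Classical

noncomputable section

/-- A skew Young diagram `λ/ν` (in English notation) with height `a` and width `b`.
Rows are indexed `1,…,a` from top to bottom and columns `1,…,b` from left to right;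
row `i` consists of the boxes in columns `ν i + 1, …, λ i` (each row is nonempty).
Box `[i,j]` has its southeast corner at the lattice point `(i,j)`, the point `(0,0)`
being the northwest corner of the bounding `a × b` rectangle. -/
structure SkewShape where
  a : ℕ
  b : ℕ
  ha : 1 ≤ a
  hb : 1 ≤ b
  lam : ℕ → ℕ
  nu : ℕ → ℕ
  lam_anti : ∀ i j : ℕ, 1 ≤ i → i ≤ j → j ≤ a → lam j ≤ lam i
  nu_anti : ∀ i j : ℕ, 1 ≤ i → i ≤ j → j ≤ a → nu j ≤ nu i
  nu_lt_lam : ∀ i : ℕ, 1 ≤ i → i ≤ a → nu i < lam i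
  lam_le_b : ∀ i : ℕ, 1 ≤ i → i ≤ a → lam i ≤ b
  lam_one : lam 1 = b
  nu_a : nu a = 0

namespace SkewShape

variable (σ : SkewShape)

/-- The boxes of `σ` : pairs `[i,j]` with `1 ≤ i ≤ a` and `ν i < j ≤ λ i`.
The poset `P_σ` is the set of boxes ordered componentwise:
`[i,j] ≤ [k,l]` iff `i ≤ k` and `j ≤ l` (the product order on `ℕ × ℕ`). -/
def cells : Finset (ℕ × ℕ) :=
  (Finset.Icc 1 σ.a ×ˢ Finset.Icc 1 σ.b).filter
    (fun c => σ.nu c.1 < c.2 ∧ c.2 ≤ σ.lam c.1)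

/-- The poset `P_σ` of boxes of `σ` is connected: it is nonempty, and any two boxes are
joined by a walk along comparable pairs of boxes. -/
def Connected : Prop :=
  σ.cells.Nonempty ∧ ∀ p ∈ σ.cells, ∀ q ∈ σ.cells,
    Relation.ReflTransGen
      (fun x y : ℕ × ℕ => x ∈ σ.cells ∧ y ∈ σ.cells ∧ (x ≤ y ∨ y ≤ x)) p q

/-- `I` is an order ideal of `P_σ`, i.e. a subshape of `σ`. -/
def IsIdeal (I : Finset (ℕ × ℕ)) : Prop :=
  I ⊆ σ.cells ∧ ∀ p ∈ I, ∀ q ∈ σ.cells, q ≤ p → q ∈ I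

/-- The set `J(σ)` of all order ideals of `P_σ` (equivalently, subshapes of `σ`). -/
def idealsFinset : Finset (Finset (ℕ × ℕ)) :=
  σ.cells.powerset.filter fun I => σ.IsIdeal I

/-- Box `p` can be toggled in to the order ideal `I`. -/
def CanToggleIn (I : Finset (ℕ × ℕ)) (p : ℕ × ℕ) : Prop :=
  p ∈ σ.cells ∧ p ∉ I ∧ σ.IsIdeal (insert p I)

/-- Box `p` can be toggled out of the order ideal `I`. -/
def CanToggleOut (I : Finset (ℕ × ℕ)) (p : ℕ × ℕ) : Prop :=
  p ∈ I ∧ σ.IsIdeal (I.erase p)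

/-- The jaggedness of `I`: the number of boxes that can be toggled in,
plus the number of boxes that can be toggled out. -/
def jag (I : Finset (ℕ × ℕ)) : ℕ :=
  (σ.cells.filter fun p => σ.CanToggleIn I p).card +
  (σ.cells.filter fun p => σ.CanToggleOut I p).card

/-- The probability, under `μ`, that a random order ideal of `P_σ` satisfies `E`. -/
def pr (μ : Finset (ℕ × ℕ) → ℝ) (E : Finset (ℕ × ℕ) → Prop) : ℝ :=
  ∑ I ∈ σ.idealsFinset.filter E, μ I

/-- `μ` is a probability distribution on `J(σ)`. -/
def IsProbDist (μ : Finset (ℕ × ℕ) → ℝ) : Prop :=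
  (∀ I, 0 ≤ μ I) ∧ (∑ I ∈ σ.idealsFinset, μ I = 1)

/-- `μ` is toggle-symmetric: for every box `p` of `σ`, the probability that `p` can be
toggled in equals the probability that `p` can be toggled out. -/
def ToggleSymmetric (μ : Finset (ℕ × ℕ) → ℝ) : Prop :=
  ∀ p ∈ σ.cells,
    σ.pr μ (fun I => σ.CanToggleIn I p) = σ.pr μ (fun I => σ.CanToggleOut I p)

/-- The expectation of the statistic `f` with respect to `μ`. -/
def expect (μ : Finset (ℕ × ℕ) → ℝ) (f : Finset (ℕ × ℕ) → ℝ) : ℝ :=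
  ∑ I ∈ σ.idealsFinset, μ I * f I

/-- `c` is a northwest outward corner of `σ`, occurring at the lattice point `c = (i,j)`:
the northwest boundary of `σ` turns at `(i,j)` with its two steps
(the top edge of box `[i+1,j]` and the left edge of box `[i,j+1]`)
not bordering a common box of `σ`. -/
def IsNWCorner (c : ℕ × ℕ) : Prop :=
  (c.1 + 1, c.2) ∈ σ.cells ∧ (c.1, c.2 + 1) ∈ σ.cells ∧ (c.1, c.2) ∉ σ.cells

/-- `c` is a southeast outward corner of `σ`, occurring at the lattice point `c = (i,j)`:
the southeast boundary of `σ` turns at `(i,j)` with its two steps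
(the right edge of box `[i+1,j]` and the bottom edge of box `[i,j+1]`)
not bordering a common box of `σ`. -/
def IsSECorner (c : ℕ × ℕ) : Prop :=
  (c.1 + 1, c.2) ∈ σ.cells ∧ (c.1, c.2 + 1) ∈ σ.cells ∧ (c.1 + 1, c.2 + 1) ∉ σ.cells

/-- The set of northwest outward corners of `σ`. -/
def nwCorners : Finset (ℕ × ℕ) :=
  (Finset.range (σ.a + 1) ×ˢ Finset.range (σ.b + 1)).filter fun c => σ.IsNWCorner c

/-- The set of southeast outward corners of `σ`.
(Together, `nwCorners` and `seCorners` form the set `C(σ)` of outward corners.) -/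
def seCorners : Finset (ℕ × ℕ) :=
  (Finset.range (σ.a + 1) ×ˢ Finset.range (σ.b + 1)).filter fun c => σ.IsSECorner c

/-- The displacement `δ(c) = 1 − i/a − j/b` of a northwest corner occurring at `(i,j)`. -/
def nwDisp (c : ℕ × ℕ) : ℝ := 1 - (c.1 : ℝ) / (σ.a : ℝ) - (c.2 : ℝ) / (σ.b : ℝ)

/-- The displacement `δ(c) = −1 + i/a + j/b` of a southeast corner occurring at `(i,j)`. -/
def seDisp (c : ℕ × ℕ) : ℝ := -1 + (c.1 : ℝ) / (σ.a : ℝ) + (c.2 : ℝ) / (σ.b : ℝ)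

/-- The lattice path of the subshape `I` includes both steps of the northwest corner at
`c = (i,j)`: neither box `[i+1,j]` nor box `[i,j+1]` belongs to `I`. -/
def NWInPath (c : ℕ × ℕ) (I : Finset (ℕ × ℕ)) : Prop :=
  (c.1 + 1, c.2) ∉ I ∧ (c.1, c.2 + 1) ∉ I

/-- The lattice path of the subshape `I` includes both steps of the southeast corner at
`c = (i,j)`: both boxes `[i+1,j]` and `[i,j+1]` belong to `I`. -/
def SEInPath (c : ℕ × ℕ) (I : Finset (ℕ × ℕ)) : Prop :=
  (c.1 + 1, c.2) ∈ I ∧ (c.1, c.2 + 1) ∈ I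

/-- The correction term `Σ_{c ∈ C(σ)} δ(c) · P_μ(c)`, where `P_μ(c)` is the
`μ`-probability that the lattice path of a random subshape includes both steps of `c`. -/
def cornerCorrection (μ : Finset (ℕ × ℕ) → ℝ) : ℝ :=
  (∑ c ∈ σ.nwCorners, σ.nwDisp c * σ.pr μ (NWInPath c)) +
  (∑ c ∈ σ.seCorners, σ.seDisp c * σ.pr μ (SEInPath c))

end SkewShape

namespace SkewShape

variable (σ : SkewShape)

/-- `σ` is balanced: connected, with every outward corner of displacement `0`
(i.e. occurring on the main anti-diagonal from `(a,0)` to `(0,b)`). -/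
def Balanced : Prop :=
  σ.Connected ∧ (∀ c ∈ σ.nwCorners, σ.nwDisp c = 0) ∧ ∀ c ∈ σ.seCorners, σ.seDisp c = 0

/-- `σ` is abundant: connected, with every outward corner of displacement `≥ 0`. -/
def Abundant : Prop :=
  σ.Connected ∧ (∀ c ∈ σ.nwCorners, 0 ≤ σ.nwDisp c) ∧ ∀ c ∈ σ.seCorners, 0 ≤ σ.seDisp c

/-- `σ` is deficient: connected, with every outward corner of displacement `≤ 0`. -/
def Deficient : Prop :=
  σ.Connected ∧ (∀ c ∈ σ.nwCorners, σ.nwDisp c ≤ 0) ∧ ∀ c ∈ σ.seCorners, σ.seDisp c ≤ 0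

end SkewShape

/-!
Encode an order ideal `I` by the column `rowEnd I i` at which each of its rows ends. The lattice
path bounding `I` turns upward at the southeast corners of the boxes that can be toggled out of
`I` and at the northwest corners of `σ` that it passes through; it turns rightward at the
northwest corners of the boxes that can be toggled in and at the southeast corners of `σ` that it
passes through. For the linear weight `i/a + j/b - 1` (the displacement `seDisp`), the upward
turns minus the rightward turns telescope along the path from `(a, 0)` to `(0, b)` to `1`, and
moving a box that can be toggled in to its northwest corner changes its weight by
`-(1/a + 1/b)`. Taking expectations, toggle-symmetry cancels the weights of the toggleable boxes,
so `(1/a + 1/b) E[#in] = 1 + Σ δ(c) P(c)`, while `E[jag] = 2 E[#in]`. For an abundant shape the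
correction `Σ δ(c) P(c)` is nonnegative.
-/

theorem Finset.sum_filter_eq_sum_filter_of_injOn {α ι M : Type*} [AddCommMonoid M]
    {s : Finset α} {p : α → Prop} [DecidablePred p] {t : Finset ι} {q : ι → Prop}
    [DecidablePred q] {e : ι → α} (he : Set.InjOn e t)
    (h : ∀ x, x ∈ s ∧ p x ↔ ∃ i ∈ t, q i ∧ e i = x) (f : α → M) :
    ∑ x ∈ s with p x, f x = ∑ i ∈ t with q i, f (e i) := by
  classical
  have himage : s.filter p = (t.filter q).image e := by
    ext x
    simp only [mem_filter, mem_image, h x, and_assoc]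
  rw [himage, sum_image (he.mono fun i hi => (mem_filter.1 hi).1)]

/-- The points `(i, r i)` and `(i - 1, r i)` are the two kinds of corners of the staircase path
whose row `i` ends at column `r i`; their weights telescope along its horizontal runs. -/
theorem Finset.sum_descents_sub_sum_ascents {M : Type*} [AddCommGroup M] {r : ℕ → ℕ}
    (hr : Antitone r) (f : ℕ → ℕ → M) {n : ℕ} (h0 : f 0 (r 0) = 0) (hn : f n (r (n + 1)) = 0) :
    ∑ i ∈ Icc 1 n with r (i + 1) < r i, f i (r i) -
        ∑ i ∈ Icc 1 n with r i < r (i - 1), f (i - 1) (r i) =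
      ∑ k ∈ range (n + 1), (f k (r k) - f k (r (k + 1))) := by
  set D : ℕ → M := fun k => if r (k + 1) < r k then f k (r k) else 0
  set E : ℕ → M := fun k => if r (k + 1) < r k then f k (r (k + 1)) else 0
  have hDE : ∀ k, D k - E k = f k (r k) - f k (r (k + 1)) := by
    intro k
    by_cases hk : r (k + 1) < r k
    · simp only [D, E, if_pos hk]
    · simp only [D, E, if_neg hk, sub_self,
        le_antisymm (hr k.le_succ) (not_lt.1 hk)]
  have hIcc : ∀ g : ℕ → M, ∑ i ∈ Icc 1 n, g i = ∑ k ∈ range n, g (k + 1) := by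
    intro g
    rw [← Ico_add_one_right_eq_Icc, sum_Ico_eq_sum_range, Nat.add_sub_cancel]
    simp only [add_comm 1]
  have hD : ∑ i ∈ Icc 1 n with r (i + 1) < r i, f i (r i) = ∑ k ∈ range (n + 1), D k := by
    rw [sum_filter, hIcc, sum_range_succ']
    simp [D, h0]
  have hE : ∑ i ∈ Icc 1 n with r i < r (i - 1), f (i - 1) (r i) = ∑ k ∈ range (n + 1), E k := by
    rw [sum_filter, hIcc, sum_range_succ]
    simp [E, hn]
  rw [hD, hE, ← sum_sub_distrib]
  exact sum_congr rfl fun k _ => hDE k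

namespace SkewShape

variable (σ : SkewShape)

lemma mem_cells {i j : ℕ} :
    (i, j) ∈ σ.cells ↔ 1 ≤ i ∧ i ≤ σ.a ∧ σ.nu i < j ∧ j ≤ σ.lam i := by
  simp only [cells, mem_filter, mem_product, mem_Icc]
  constructor
  · rintro ⟨⟨hi, -⟩, hj⟩
    exact ⟨hi.1, hi.2, hj⟩
  · rintro ⟨h1, h2, h3, h4⟩
    exact ⟨⟨⟨h1, h2⟩, by omega, h4.trans (σ.lam_le_b i h1 h2)⟩, h3, h4⟩

variable {σ}

lemma Connected.nu_lt_lam_succ (hc : σ.Connected) {i : ℕ} (h1 : 1 ≤ i) (h2 : i < σ.a) :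
    σ.nu i < σ.lam (i + 1) := by
  by_contra! hgap
  -- Otherwise no comparable pair of boxes straddles rows `i` and `i + 1`.
  have hstep : ∀ x y : ℕ × ℕ, x ∈ σ.cells → y ∈ σ.cells → x ≤ y → (i < x.1 ↔ i < y.1) := by
    rintro ⟨k, l⟩ ⟨k', l'⟩ hx hy ⟨hkk', hll'⟩
    rw [mem_cells] at hx hy
    refine ⟨fun h => h.trans_le hkk', fun h => ?_⟩
    by_contra! hk
    have := σ.nu_anti k i hx.1 hk h2.le
    have := σ.lam_anti (i + 1) k' (by omega) h hy.2.1
    simp only at hll' hx hy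
    omega
  have hbot : (σ.a, 1) ∈ σ.cells := by
    have := σ.nu_lt_lam σ.a σ.ha le_rfl
    exact σ.mem_cells.2 ⟨σ.ha, le_rfl, by rw [σ.nu_a]; omega, by omega⟩
  have htop : (1, σ.b) ∈ σ.cells := by
    have := σ.nu_lt_lam 1 le_rfl σ.ha
    exact σ.mem_cells.2 ⟨le_rfl, σ.ha, by rwa [← σ.lam_one], σ.lam_one.ge⟩
  have hreach : ∀ z, Relation.ReflTransGen
      (fun x y : ℕ × ℕ => x ∈ σ.cells ∧ y ∈ σ.cells ∧ (x ≤ y ∨ y ≤ x)) (σ.a, 1) z → i < z.1 := by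
    intro z hz
    induction hz with
    | refl => exact h2
    | tail _ hxy ih =>
      obtain ⟨hx, hy, hle | hle⟩ := hxy
      · exact (hstep _ _ hx hy hle).1 ih
      · exact (hstep _ _ hy hx hle).2 ih
  have := hreach _ (hc.2 _ hbot _ htop)
  simp only at this
  omega

variable (σ)

/-- The column of the last box of row `i` of `I`, or `ν i` if that row of `I` is empty.
The values `b` at row `0` and `0` below row `a` make the lattice path bounding `I` run
from `(a, 0)` to `(0, b)`: its vertical steps are at columns `rowEnd I i`. -/
def rowEnd (I : Finset (ℕ × ℕ)) (i : ℕ) : ℕ :=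
  if i = 0 then σ.b
  else if i ≤ σ.a then max (σ.nu i) ((I.filter fun c => c.1 = i).sup Prod.snd) else 0

variable (I : Finset (ℕ × ℕ))

@[simp]
lemma rowEnd_zero : σ.rowEnd I 0 = σ.b := rfl

lemma rowEnd_of_lt {i : ℕ} (h : σ.a < i) : σ.rowEnd I i = 0 := by
  rw [rowEnd, if_neg (by omega), if_neg (by omega)]

lemma nu_le_rowEnd {i : ℕ} (h1 : 1 ≤ i) (h2 : i ≤ σ.a) : σ.nu i ≤ σ.rowEnd I i := by
  rw [rowEnd, if_neg (by omega), if_pos h2]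
  exact le_max_left _ _

variable {σ I}

lemma IsIdeal.mem_iff (hI : σ.IsIdeal I) {i j : ℕ} :
    (i, j) ∈ I ↔ 1 ≤ i ∧ i ≤ σ.a ∧ σ.nu i < j ∧ j ≤ σ.rowEnd I i := by
  constructor
  · intro hij
    obtain ⟨h1, h2, h3, -⟩ := σ.mem_cells.1 (hI.1 hij)
    refine ⟨h1, h2, h3, ?_⟩
    rw [rowEnd, if_neg (by omega), if_pos h2]
    exact le_max_of_le_right
      (le_sup (f := Prod.snd) (s := I.filter fun c => c.1 = i) (mem_filter.2 ⟨hij, rfl⟩))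
  · rintro ⟨h1, h2, h3, h4⟩
    rw [rowEnd, if_neg (by omega), if_pos h2] at h4
    obtain h | h := le_max_iff.1 h4
    · omega
    obtain ⟨⟨k, l⟩, hkl, hjl⟩ := (Finset.le_sup_iff (by omega : 0 < j)).1 h
    obtain ⟨hklI, rfl : k = i⟩ := mem_filter.1 hkl
    have hjlam := (σ.mem_cells.1 (hI.1 hklI)).2.2.2
    exact hI.2 _ hklI _ (σ.mem_cells.2 ⟨h1, h2, h3, hjl.trans hjlam⟩) ⟨le_rfl, hjl⟩

lemma IsIdeal.rowEnd_le_lam (hI : σ.IsIdeal I) {i : ℕ} (h1 : 1 ≤ i) (h2 : i ≤ σ.a) :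
    σ.rowEnd I i ≤ σ.lam i := by
  rw [rowEnd, if_neg (by omega), if_pos h2]
  refine max_le (σ.nu_lt_lam i h1 h2).le (Finset.sup_le fun c hc => ?_)
  obtain ⟨hcI, rfl⟩ := mem_filter.1 hc
  exact (σ.mem_cells.1 (hI.1 hcI)).2.2.2

lemma IsIdeal.rowEnd_succ_le (hI : σ.IsIdeal I) (i : ℕ) :
    σ.rowEnd I (i + 1) ≤ σ.rowEnd I i := by
  rcases Nat.eq_zero_or_pos i with rfl | hi
  · exact (hI.rowEnd_le_lam le_rfl σ.ha).trans σ.lam_one.le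
  rcases le_or_gt σ.a i with hai | hia
  · rw [σ.rowEnd_of_lt I (by omega)]
    exact Nat.zero_le _
  by_contra! hlt
  have hν := σ.nu_le_rowEnd I hi hia.le
  have hν' := σ.nu_anti i (i + 1) hi (by omega) hia
  have hlam := σ.lam_anti i (i + 1) hi (by omega) hia
  have hlam' := hI.rowEnd_le_lam (i := i + 1) (by omega) hia
  -- The last box of row `i + 1` lies below a box of row `i` that is missing from `I`.
  have hmem : (i + 1, σ.rowEnd I (i + 1)) ∈ I := hI.mem_iff.2 ⟨by omega, hia, by omega, le_rfl⟩
  have := hI.2 _ hmem (i, σ.rowEnd I (i + 1)) (σ.mem_cells.2 ⟨hi, hia.le, by omega, by omega⟩)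
    ⟨by simp, le_rfl⟩
  have := (hI.mem_iff.1 this).2.2.2
  omega

lemma IsIdeal.antitone_rowEnd (hI : σ.IsIdeal I) : Antitone (σ.rowEnd I) :=
  antitone_nat_of_succ_le hI.rowEnd_succ_le

lemma IsIdeal.isIdeal_erase_iff (hI : σ.IsIdeal I) {p : ℕ × ℕ} (hp : p ∈ I) :
    σ.IsIdeal (I.erase p) ↔ ∀ q ∈ I, p ≤ q → q = p := by
  constructor
  · intro h q hq hpq
    by_contra hne
    exact (mem_erase.1 (h.2 q (mem_erase.2 ⟨hne, hq⟩) p (hI.1 hp) hpq)).1 rfl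
  · intro hmax
    refine ⟨(erase_subset p I).trans hI.1, fun q hq r hr hrq => mem_erase.2 ⟨?_, ?_⟩⟩
    · rintro rfl
      exact (mem_erase.1 hq).1 (hmax q (mem_of_mem_erase hq) hrq)
    · exact hI.2 q (mem_of_mem_erase hq) r hr hrq

lemma IsIdeal.isIdeal_insert_iff (hI : σ.IsIdeal I) {p : ℕ × ℕ} (hp : p ∈ σ.cells) :
    σ.IsIdeal (insert p I) ↔ ∀ q ∈ σ.cells, q ≤ p → q = p ∨ q ∈ I := by
  constructor
  · intro h q hq hqp
    exact mem_insert.1 (h.2 p (mem_insert_self p I) q hq hqp)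
  · intro hmin
    refine ⟨insert_subset hp hI.1, fun q hq r hr hrq => mem_insert.2 ?_⟩
    obtain rfl | hqI := mem_insert.1 hq
    · exact hmin r hr hrq
    · exact Or.inr (hI.2 q hqI r hr hrq)

lemma IsIdeal.canToggleOut_iff (hI : σ.IsIdeal I) {p : ℕ × ℕ} :
    p ∈ σ.cells ∧ σ.CanToggleOut I p ↔ ∃ i ∈ Icc 1 σ.a,
      (σ.rowEnd I (i + 1) < σ.rowEnd I i ∧ σ.nu i < σ.rowEnd I i) ∧ (i, σ.rowEnd I i) = p := by
  constructor
  · obtain ⟨i, j⟩ := p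
    rintro ⟨-, hpI, herase⟩
    have hmax := (hI.isIdeal_erase_iff hpI).1 herase
    obtain ⟨h1, h2, h3, h4⟩ := hI.mem_iff.1 hpI
    have hj : j = σ.rowEnd I i := by
      by_contra hne
      have := hmax (i, σ.rowEnd I i) (hI.mem_iff.2 ⟨h1, h2, by omega, le_rfl⟩) ⟨le_rfl, h4⟩
      simp only [Prod.mk.injEq] at this
      omega
    have hdesc : σ.rowEnd I (i + 1) < j := by
      by_contra! hle
      have hia : i < σ.a := by
        by_contra
        rw [σ.rowEnd_of_lt I (by omega)] at hle
        omega
      have := σ.nu_anti i (i + 1) h1 (by omega) hia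
      have := hmax (i + 1, j) (hI.mem_iff.2 ⟨by omega, hia, by omega, hle⟩) ⟨by simp, le_rfl⟩
      simp at this
    exact ⟨i, mem_Icc.2 ⟨h1, h2⟩, ⟨by omega, by omega⟩, by rw [hj]⟩
  · rintro ⟨i, hi, ⟨hdesc, hnu⟩, rfl⟩
    obtain ⟨h1, h2⟩ := mem_Icc.1 hi
    have hpI : (i, σ.rowEnd I i) ∈ I := hI.mem_iff.2 ⟨h1, h2, hnu, le_rfl⟩
    refine ⟨hI.1 hpI, hpI, (hI.isIdeal_erase_iff hpI).2 ?_⟩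
    rintro ⟨k, l⟩ hq ⟨hik, hl⟩
    have hlk := (hI.mem_iff.1 hq).2.2.2
    simp only at hik hl hlk ⊢
    obtain rfl | hik := hik.eq_or_lt
    · rw [le_antisymm hlk hl]
    · have := hI.antitone_rowEnd (show i + 1 ≤ k from hik)
      omega

lemma IsIdeal.canToggleIn_iff (hI : σ.IsIdeal I) {p : ℕ × ℕ} :
    p ∈ σ.cells ∧ σ.CanToggleIn I p ↔ ∃ i ∈ Icc 1 σ.a,
      (σ.rowEnd I i < σ.rowEnd I (i - 1) ∧ σ.rowEnd I i < σ.lam i) ∧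
        (i, σ.rowEnd I i + 1) = p := by
  constructor
  · obtain ⟨i, j⟩ := p
    rintro ⟨-, hp, hpI, hins⟩
    have hmin := (hI.isIdeal_insert_iff hp).1 hins
    obtain ⟨h1, h2, h3, h4⟩ := σ.mem_cells.1 hp
    have hν := σ.nu_le_rowEnd I h1 h2
    have hlt : σ.rowEnd I i < j := by
      by_contra!
      exact hpI (hI.mem_iff.2 ⟨h1, h2, h3, this⟩)
    have hj : j = σ.rowEnd I i + 1 := by
      by_contra hne
      have := hmin (i, σ.rowEnd I i + 1) (σ.mem_cells.2 ⟨h1, h2, by omega, by omega⟩)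
        ⟨le_rfl, by simp only; omega⟩
      simp only [Prod.mk.injEq, hI.mem_iff] at this
      omega
    have hasc : σ.rowEnd I i < σ.rowEnd I (i - 1) := by
      obtain rfl | h1 := h1.eq_or_lt
      · have := σ.lam_one
        simp only [Nat.sub_self, rowEnd_zero]
        omega
      by_contra! hle
      have := σ.nu_le_rowEnd I (i := i - 1) (by omega) (by omega)
      have := σ.lam_anti (i - 1) i (by omega) (by omega) h2
      have := hmin (i - 1, j) (σ.mem_cells.2 ⟨by omega, by omega, by omega, by omega⟩)
        ⟨by simp only; omega, le_rfl⟩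
      simp only [Prod.mk.injEq, hI.mem_iff] at this
      omega
    exact ⟨i, mem_Icc.2 ⟨h1, h2⟩, ⟨hasc, by omega⟩, by rw [hj]⟩
  · rintro ⟨i, hi, ⟨hasc, hlam⟩, rfl⟩
    obtain ⟨h1, h2⟩ := mem_Icc.1 hi
    have hν := σ.nu_le_rowEnd I h1 h2
    have hp : (i, σ.rowEnd I i + 1) ∈ σ.cells := σ.mem_cells.2 ⟨h1, h2, by omega, hlam⟩
    refine ⟨hp, hp, fun h => by simpa using (hI.mem_iff.1 h).2.2.2, ?_⟩
    refine (hI.isIdeal_insert_iff hp).2 fun ⟨k, l⟩ hq ⟨hki, hl⟩ => ?_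
    obtain ⟨hk1, hka, hkν, -⟩ := σ.mem_cells.1 hq
    simp only [Prod.mk.injEq, hI.mem_iff] at hki hl ⊢
    obtain rfl | hki := hki.eq_or_lt
    · omega
    · have := hI.antitone_rowEnd (show k ≤ i - 1 by omega)
      omega

lemma IsIdeal.nwInPath_iff (hI : σ.IsIdeal I) (hc : σ.Connected) {c : ℕ × ℕ} :
    c ∈ σ.nwCorners ∧ NWInPath c I ↔ ∃ i ∈ Icc 1 σ.a,
      (σ.rowEnd I (i + 1) < σ.rowEnd I i ∧ ¬ σ.nu i < σ.rowEnd I i) ∧ (i, σ.rowEnd I i) = c := by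
  obtain ⟨i, j⟩ := c
  simp only [nwCorners, IsNWCorner, NWInPath, mem_filter, mem_product, mem_range, σ.mem_cells,
    hI.mem_iff, Prod.mk.injEq]
  constructor
  · rintro ⟨⟨-, hbelow, hright, hnot⟩, hbelowI, hrightI⟩
    have := σ.nu_le_rowEnd I hright.1 hright.2.1
    refine ⟨i, mem_Icc.2 ⟨hright.1, hright.2.1⟩, ⟨?_, by omega⟩, rfl, by omega⟩
    omega
  · rintro ⟨i, hi, ⟨hdesc, hempty⟩, rfl, rfl⟩
    obtain ⟨h1, h2⟩ := mem_Icc.1 hi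
    have := σ.nu_le_rowEnd I h1 h2
    have hia : i < σ.a := by
      by_contra
      obtain rfl : i = σ.a := by omega
      rw [σ.rowEnd_of_lt I (by omega)] at hdesc
      have := σ.nu_a
      omega
    have := σ.nu_le_rowEnd I (i := i + 1) (by omega) hia
    have := hc.nu_lt_lam_succ h1 hia
    have := σ.nu_lt_lam i h1 h2
    have := σ.lam_le_b i h1 h2
    omega

lemma IsIdeal.seInPath_iff (hI : σ.IsIdeal I) (hc : σ.Connected) {c : ℕ × ℕ} :
    c ∈ σ.seCorners ∧ SEInPath c I ↔ ∃ i ∈ Icc 1 σ.a,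
      (σ.rowEnd I i < σ.rowEnd I (i - 1) ∧ ¬ σ.rowEnd I i < σ.lam i) ∧
        (i - 1, σ.rowEnd I i) = c := by
  obtain ⟨k, j⟩ := c
  simp only [seCorners, IsSECorner, SEInPath, mem_filter, mem_product, mem_range, σ.mem_cells,
    hI.mem_iff, Prod.mk.injEq]
  constructor
  · rintro ⟨⟨-, hbelow, hright, hnot⟩, hbelowI, hrightI⟩
    have := hI.rowEnd_le_lam (i := k + 1) (by omega) hbelow.2.1
    refine ⟨k + 1, mem_Icc.2 ⟨by omega, hbelow.2.1⟩, ⟨?_, by omega⟩, by simp, by omega⟩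
    simp only [Nat.add_sub_cancel]
    omega
  · rintro ⟨i, hi, ⟨hasc, hfull⟩, rfl, rfl⟩
    obtain ⟨h1, h2⟩ := mem_Icc.1 hi
    have hlam := hI.rowEnd_le_lam h1 h2
    have := σ.nu_lt_lam i h1 h2
    have hi1 : 1 < i := by
      by_contra
      obtain rfl : i = 1 := by omega
      have := σ.lam_one
      simp only [Nat.sub_self, rowEnd_zero] at hasc
      omega
    have := hc.nu_lt_lam_succ (i := i - 1) (by omega) (by omega)
    have := hI.rowEnd_le_lam (i := i - 1) (by omega) (by omega)
    have := σ.lam_le_b (i - 1) (by omega) (by omega)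
    rw [Nat.sub_add_cancel (by omega : 1 ≤ i)] at *
    omega

lemma seDisp_sub_one {i j : ℕ} (hi : 1 ≤ i) (hj : 1 ≤ j) :
    σ.seDisp (i - 1, j - 1) = σ.seDisp (i, j) - (1 / σ.a + 1 / σ.b) := by
  simp only [seDisp, Nat.cast_sub hi, Nat.cast_sub hj, Nat.cast_one]
  ring

lemma IsIdeal.sum_descents_sub_sum_ascents_seDisp (hI : σ.IsIdeal I) :
    ∑ i ∈ Icc 1 σ.a with σ.rowEnd I (i + 1) < σ.rowEnd I i, σ.seDisp (i, σ.rowEnd I i) -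
        ∑ i ∈ Icc 1 σ.a with σ.rowEnd I i < σ.rowEnd I (i - 1), σ.seDisp (i - 1, σ.rowEnd I i) =
      1 := by
  have hb : (σ.b : ℝ) ≠ 0 := by have := σ.hb; positivity
  have ha : (σ.a : ℝ) ≠ 0 := by have := σ.ha; positivity
  rw [sum_descents_sub_sum_ascents hI.antitone_rowEnd (fun k j => σ.seDisp (k, j))
    (by simp [seDisp, hb]) (by simp [seDisp, σ.rowEnd_of_lt I (Nat.lt_succ_self _), ha])]
  calc ∑ k ∈ range (σ.a + 1), (σ.seDisp (k, σ.rowEnd I k) - σ.seDisp (k, σ.rowEnd I (k + 1)))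
      = ∑ k ∈ range (σ.a + 1),
          ((σ.rowEnd I k : ℝ) / σ.b - (σ.rowEnd I (k + 1) : ℝ) / σ.b) :=
        sum_congr rfl fun k _ => by simp only [seDisp]; ring
    _ = 1 := by
        rw [sum_range_sub' (fun k => (σ.rowEnd I k : ℝ) / σ.b)]
        simp [σ.rowEnd_of_lt I (Nat.lt_succ_self _), hb]

lemma IsIdeal.sum_canToggleOut_add_sum_nwInPath (hI : σ.IsIdeal I) (hc : σ.Connected)
    {M : Type*} [AddCommMonoid M] (f : ℕ × ℕ → M) :
    ∑ p ∈ σ.cells with σ.CanToggleOut I p, f p + ∑ c ∈ σ.nwCorners with NWInPath c I, f c =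
      ∑ i ∈ Icc 1 σ.a with σ.rowEnd I (i + 1) < σ.rowEnd I i, f (i, σ.rowEnd I i) := by
  have hinj : Set.InjOn (fun i => (i, σ.rowEnd I i)) (Icc 1 σ.a) :=
    fun i _ k _ h => (Prod.ext_iff.1 h).1
  rw [sum_filter_eq_sum_filter_of_injOn hinj (fun _ => hI.canToggleOut_iff),
    sum_filter_eq_sum_filter_of_injOn hinj (fun _ => hI.nwInPath_iff hc)]
  conv_rhs => rw [← sum_filter_add_sum_filter_not _ fun i => σ.nu i < σ.rowEnd I i]
  rw [filter_filter, filter_filter]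

lemma IsIdeal.sum_canToggleIn_add_sum_seInPath (hI : σ.IsIdeal I) (hc : σ.Connected)
    {M : Type*} [AddCommMonoid M] (f : ℕ × ℕ → M) :
    ∑ p ∈ σ.cells with σ.CanToggleIn I p, f (p.1 - 1, p.2 - 1) +
        ∑ c ∈ σ.seCorners with SEInPath c I, f c =
      ∑ i ∈ Icc 1 σ.a with σ.rowEnd I i < σ.rowEnd I (i - 1), f (i - 1, σ.rowEnd I i) := by
  have hinj : Set.InjOn (fun i => (i, σ.rowEnd I i + 1)) (Icc 1 σ.a) :=
    fun i _ k _ h => (Prod.ext_iff.1 h).1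
  have hinj' : Set.InjOn (fun i => (i - 1, σ.rowEnd I i)) (Icc 1 σ.a) := by
    intro i hi k hk h
    simp only [coe_Icc, Set.mem_Icc, Prod.mk.injEq] at hi hk h
    omega
  rw [sum_filter_eq_sum_filter_of_injOn hinj (fun _ => hI.canToggleIn_iff),
    sum_filter_eq_sum_filter_of_injOn hinj' (fun _ => hI.seInPath_iff hc)]
  conv_rhs => rw [← sum_filter_add_sum_filter_not _ fun i => σ.rowEnd I i < σ.lam i]
  rw [filter_filter, filter_filter]
  simp only [Nat.add_sub_cancel]

lemma IsIdeal.toggle_balance (hI : σ.IsIdeal I) (hc : σ.Connected) :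
    ∑ p ∈ σ.cells with σ.CanToggleOut I p, σ.seDisp p -
        ∑ p ∈ σ.cells with σ.CanToggleIn I p, σ.seDisp p +
        (1 / σ.a + 1 / σ.b) * #{p ∈ σ.cells | σ.CanToggleIn I p} =
      1 + ∑ c ∈ σ.nwCorners with NWInPath c I, σ.nwDisp c +
        ∑ c ∈ σ.seCorners with SEInPath c I, σ.seDisp c := by
  have hdesc := hI.sum_canToggleOut_add_sum_nwInPath hc σ.seDisp
  have hasc := hI.sum_canToggleIn_add_sum_seInPath hc σ.seDisp
  have hnw : ∑ c ∈ σ.nwCorners with NWInPath c I, σ.seDisp c =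
      -∑ c ∈ σ.nwCorners with NWInPath c I, σ.nwDisp c := by
    rw [← sum_neg_distrib]
    exact sum_congr rfl fun c _ => by simp only [seDisp, nwDisp]; ring
  have hin : ∑ p ∈ σ.cells with σ.CanToggleIn I p, σ.seDisp (p.1 - 1, p.2 - 1) =
      ∑ p ∈ σ.cells with σ.CanToggleIn I p, σ.seDisp p -
        (1 / σ.a + 1 / σ.b) * #{p ∈ σ.cells | σ.CanToggleIn I p} := by
    rw [cast_card, mul_sum, ← sum_sub_distrib]
    refine sum_congr rfl fun ⟨i, j⟩ hp => ?_
    obtain ⟨h1, -, hj, -⟩ := σ.mem_cells.1 (mem_filter.1 hp).1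
    rw [seDisp_sub_one h1 (by omega), mul_one]
  linarith [hI.sum_descents_sub_sum_ascents_seDisp]

variable (μ : Finset (ℕ × ℕ) → ℝ)

lemma expect_congr {f g : Finset (ℕ × ℕ) → ℝ} (h : ∀ I, σ.IsIdeal I → f I = g I) :
    σ.expect μ f = σ.expect μ g :=
  sum_congr rfl fun I hI => by rw [h I (mem_filter.1 hI).2]

lemma expect_add (f g : Finset (ℕ × ℕ) → ℝ) :
    σ.expect μ (fun I => f I + g I) = σ.expect μ f + σ.expect μ g := by
  simp only [expect, mul_add, sum_add_distrib]

lemma expect_sub (f g : Finset (ℕ × ℕ) → ℝ) :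
    σ.expect μ (fun I => f I - g I) = σ.expect μ f - σ.expect μ g := by
  simp only [expect, mul_sub, sum_sub_distrib]

lemma expect_const_mul (c : ℝ) (f : Finset (ℕ × ℕ) → ℝ) :
    σ.expect μ (fun I => c * f I) = c * σ.expect μ f := by
  simp only [expect, mul_sum, mul_left_comm c]

lemma IsProbDist.expect_const (hμ : σ.IsProbDist μ) (c : ℝ) : σ.expect μ (fun _ => c) = c := by
  rw [expect, ← sum_mul, hμ.2, one_mul]

lemma expect_sum_filter (F : Finset (ℕ × ℕ)) (Q : ℕ × ℕ → Finset (ℕ × ℕ) → Prop)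
    (f : ℕ × ℕ → ℝ) :
    σ.expect μ (fun I => ∑ p ∈ F with Q p I, f p) = ∑ p ∈ F, f p * σ.pr μ (Q p) := by
  simp only [expect, pr, sum_filter, mul_sum, mul_ite, mul_zero]
  rw [sum_comm]
  exact sum_congr rfl fun p _ => sum_congr rfl fun I _ => by split_ifs <;> ring

lemma ToggleSymmetric.expect_sum_canToggleOut (hts : σ.ToggleSymmetric μ) (f : ℕ × ℕ → ℝ) :
    σ.expect μ (fun I => ∑ p ∈ σ.cells with σ.CanToggleOut I p, f p) =
      σ.expect μ (fun I => ∑ p ∈ σ.cells with σ.CanToggleIn I p, f p) := by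
  rw [expect_sum_filter, expect_sum_filter]
  exact sum_congr rfl fun p hp => by rw [hts p hp]

lemma ToggleSymmetric.expect_jag (hts : σ.ToggleSymmetric μ) :
    σ.expect μ (fun I => (σ.jag I : ℝ)) =
      2 * σ.expect μ (fun I => (#{p ∈ σ.cells | σ.CanToggleIn I p} : ℝ)) := by
  simp only [jag, Nat.cast_add, expect_add, cast_card, hts.expect_sum_canToggleOut]
  ring

theorem expect_jag_eq (hc : σ.Connected) (hμ : σ.IsProbDist μ) (hts : σ.ToggleSymmetric μ) :
    σ.expect μ (fun I => (σ.jag I : ℝ)) =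
      2 * σ.a * σ.b / (σ.a + σ.b) * (1 + σ.cornerCorrection μ) := by
  have hbal := expect_congr μ fun I hI => hI.toggle_balance hc
  simp only [expect_add, expect_sub, expect_const_mul, hts.expect_sum_canToggleOut, sub_self,
    zero_add, hμ.expect_const, expect_sum_filter] at hbal
  have ha : (0 : ℝ) < σ.a := by have := σ.ha; positivity
  have hb : (0 : ℝ) < σ.b := by have := σ.hb; positivity
  rw [hts.expect_jag, cornerCorrection, ← add_assoc, ← hbal]
  field_simp
  ring

lemma Abundant.cornerCorrection_nonneg (hab : σ.Abundant) (hμ : σ.IsProbDist μ) :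
    0 ≤ σ.cornerCorrection μ :=
  add_nonneg
    (sum_nonneg fun c hc => mul_nonneg (hab.2.1 c hc) (sum_nonneg fun I _ => hμ.1 I))
    (sum_nonneg fun c hc => mul_nonneg (hab.2.2 c hc) (sum_nonneg fun I _ => hμ.1 I))

end SkewShape

/-- Corollary 3.11, first part: for an abundant skew shape `σ` with
height `a` and width `b`, the expected jaggedness of a subshape with respect to any
toggle-symmetric probability distribution on `J(σ)` is at least `2ab/(a+b)`. -/
theorem SkewShape.expected_jaggedness_abundant (σ : SkewShape) (hab : σ.Abundant)
    (μ : Finset (ℕ × ℕ) → ℝ) (hμ : σ.IsProbDist μ) (hts : σ.ToggleSymmetric μ) :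
    2 * (σ.a : ℝ) * (σ.b : ℝ) / ((σ.a : ℝ) + (σ.b : ℝ)) ≤
      σ.expect μ (fun I => (σ.jag I : ℝ)) := by
  rw [σ.expect_jag_eq μ hab.1 hμ hts]
  have hbound : (0 : ℝ) ≤ 2 * σ.a * σ.b / (σ.a + σ.b) := by positivity
  exact le_mul_of_one_le_right hbound (le_add_of_nonneg_right (hab.cornerCorrection_nonneg μ hμ))
end
end

section
/- Let σ be a connected skew shape with height a and width b. Then for every subshape ρ ∈ J(σ), the jaggedness satisfies 1 ≤ jag(ρ) ≤ min{2a, 2b, a+b−1}; in particular jag(ρ) < 4ab/(a+b). -/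
open Finset
open scoped Classical

noncomputable section

/-!
The boxes that can be toggled in (the minimal boxes of `σ \ ρ`) form an antichain, and so do
the boxes that can be toggled out (the maximal boxes of `ρ`). An antichain of the product order
has at most one box per row and per column, which gives `jag ρ ≤ 2a` and `jag ρ ≤ 2b`.
For `a + b - 1`, the content `j - i` is injective on all toggleable boxes together: boxes with
equal content are comparable, and a removable box strictly northwest of an addable one is
impossible, since a box between them would lie in `ρ` above the removable one. Contents of boxes
of `σ` take only the `a + b - 1` values in `(-a, b)`. The bound `4ab/(a+b)` follows from
the three by arithmetic, and `jag ρ ≥ 1` from the existence of a maximal box of `ρ` or a minimal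
box of `σ \ ρ`.
-/

lemma IsAntichain.eq_of_related {α : Type*} {r : α → α → Prop} {s : Set α} {a b : α}
    (hs : IsAntichain r s) (ha : a ∈ s) (hb : b ∈ s) (h : r a b ∨ r b a) : a = b :=
  h.elim (hs.eq ha hb) (hs.eq' ha hb)

lemma IsAntichain.injOn_fst {α β : Type*} [Preorder α] [LinearOrder β] {s : Set (α × β)}
    (hs : IsAntichain (· ≤ ·) s) : Set.InjOn Prod.fst s :=
  fun p hp q hq h => hs.eq_of_related hp hq <| (le_total p.2 q.2).imp (⟨h.le, ·⟩) (⟨h.ge, ·⟩)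

lemma IsAntichain.injOn_snd {α β : Type*} [LinearOrder α] [Preorder β] {s : Set (α × β)}
    (hs : IsAntichain (· ≤ ·) s) : Set.InjOn Prod.snd s :=
  fun p hp q hq h => hs.eq_of_related hp hq <| (le_total p.1 q.1).imp (⟨·, h.le⟩) (⟨·, h.ge⟩)

namespace SkewShape

variable {σ : SkewShape} {ρ : Finset (ℕ × ℕ)}

lemma mem_cells_iff {p : ℕ × ℕ} :
    p ∈ σ.cells ↔ 1 ≤ p.1 ∧ p.1 ≤ σ.a ∧ 1 ≤ p.2 ∧ p.2 ≤ σ.b ∧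
      σ.nu p.1 < p.2 ∧ p.2 ≤ σ.lam p.1 := by
  simp only [cells, mem_filter, mem_product, mem_Icc, and_assoc]

lemma one_b_mem_cells : (1, σ.b) ∈ σ.cells := by
  have h := σ.nu_lt_lam 1 le_rfl σ.ha
  rw [σ.lam_one] at h
  exact mem_cells_iff.2 ⟨le_rfl, σ.ha, σ.hb, le_rfl, h, σ.lam_one.ge⟩

lemma mem_cells_of_le_of_le {p q r : ℕ × ℕ} (hp : p ∈ σ.cells) (hq : q ∈ σ.cells)
    (hpr : p ≤ r) (hrq : r ≤ q) : r ∈ σ.cells := by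
  obtain ⟨hp1, -, -, -, hpnu, -⟩ := mem_cells_iff.1 hp
  obtain ⟨-, hqa, -, hqb, -, hqlam⟩ := mem_cells_iff.1 hq
  obtain ⟨h1, h2⟩ := hpr
  obtain ⟨h3, h4⟩ := hrq
  have hnu := σ.nu_anti p.1 r.1 hp1 h1 (h3.trans hqa)
  have hlam := σ.lam_anti r.1 q.1 (hp1.trans h1) h3 hqa
  exact mem_cells_iff.2 ⟨hp1.trans h1, h3.trans hqa, by omega, h4.trans hqb, by omega, by omega⟩

lemma card_le_a_of_isAntichain {S : Finset (ℕ × ℕ)} (hS : S ⊆ σ.cells)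
    (hanti : IsAntichain (· ≤ ·) (S : Set (ℕ × ℕ))) : S.card ≤ σ.a := by
  simpa using card_le_card_of_injOn Prod.fst (t := Icc 1 σ.a)
    (fun p hp => mem_Icc.2 ⟨(mem_cells_iff.1 (hS hp)).1, (mem_cells_iff.1 (hS hp)).2.1⟩)
    hanti.injOn_fst

lemma card_le_b_of_isAntichain {S : Finset (ℕ × ℕ)} (hS : S ⊆ σ.cells)
    (hanti : IsAntichain (· ≤ ·) (S : Set (ℕ × ℕ))) : S.card ≤ σ.b := by
  simpa using card_le_card_of_injOn Prod.snd (t := Icc 1 σ.b)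
    (fun p hp => mem_Icc.2 ⟨(mem_cells_iff.1 (hS hp)).2.2.1, (mem_cells_iff.1 (hS hp)).2.2.2.1⟩)
    hanti.injOn_snd

def toggleIns (σ : SkewShape) (ρ : Finset (ℕ × ℕ)) : Finset (ℕ × ℕ) :=
  σ.cells.filter fun p => σ.CanToggleIn ρ p

def toggleOuts (σ : SkewShape) (ρ : Finset (ℕ × ℕ)) : Finset (ℕ × ℕ) :=
  σ.cells.filter fun p => σ.CanToggleOut ρ p

lemma toggleIns_subset_cells : σ.toggleIns ρ ⊆ σ.cells := filter_subset _ _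

lemma toggleOuts_subset_cells : σ.toggleOuts ρ ⊆ σ.cells := filter_subset _ _

lemma jag_eq_card_add_card : σ.jag ρ = (σ.toggleIns ρ).card + (σ.toggleOuts ρ).card := rfl

lemma isAntichain_toggleIns : IsAntichain (· ≤ ·) (σ.toggleIns ρ : Set (ℕ × ℕ)) := by
  intro p hp q hq hne hle
  obtain ⟨-, hpc, hpρ, -⟩ := mem_filter.1 hp
  obtain ⟨-, -, -, -, hqideal⟩ := mem_filter.1 hq
  rcases mem_insert.1 (hqideal q (mem_insert_self q ρ) p hpc hle) with h | h
  exacts [hne h, hpρ h]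

lemma isAntichain_toggleOuts : IsAntichain (· ≤ ·) (σ.toggleOuts ρ : Set (ℕ × ℕ)) := by
  intro p hp q hq hne hle
  obtain ⟨hpc, -, -, hpideal⟩ := mem_filter.1 hp
  obtain ⟨-, hqρ, -⟩ := mem_filter.1 hq
  exact notMem_erase p ρ (hpideal q (mem_erase.2 ⟨hne.symm, hqρ⟩) p hpc hle)

lemma disjoint_toggleIns_toggleOuts : Disjoint (σ.toggleIns ρ) (σ.toggleOuts ρ) :=
  disjoint_left.2 fun _ hp hq => (mem_filter.1 hp).2.2.1 (mem_filter.1 hq).2.1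

lemma jag_le_two_mul_a : σ.jag ρ ≤ 2 * σ.a := by
  have hin : (σ.toggleIns ρ).card ≤ σ.a :=
    card_le_a_of_isAntichain toggleIns_subset_cells isAntichain_toggleIns
  have hout : (σ.toggleOuts ρ).card ≤ σ.a :=
    card_le_a_of_isAntichain toggleOuts_subset_cells isAntichain_toggleOuts
  rw [jag_eq_card_add_card]
  omega

lemma jag_le_two_mul_b : σ.jag ρ ≤ 2 * σ.b := by
  have hin : (σ.toggleIns ρ).card ≤ σ.b :=
    card_le_b_of_isAntichain toggleIns_subset_cells isAntichain_toggleIns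
  have hout : (σ.toggleOuts ρ).card ≤ σ.b :=
    card_le_b_of_isAntichain toggleOuts_subset_cells isAntichain_toggleOuts
  rw [jag_eq_card_add_card]
  omega

/-- The box right of `p` lies in `σ` by convexity and strictly below `q`, hence in `ρ`;
but it lies above `p`, so `p` could not be removed from `ρ`. -/
lemma not_canToggleIn_of_canToggleOut {p q : ℕ × ℕ} (hpc : p ∈ σ.cells)
    (hp : σ.CanToggleOut ρ p) (h1 : p.1 < q.1) (h2 : p.2 < q.2) : ¬ σ.CanToggleIn ρ q := by
  rintro ⟨hqc, -, -, hqideal⟩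
  have hr : (p.1, p.2 + 1) ∈ σ.cells :=
    mem_cells_of_le_of_le hpc hqc ⟨le_rfl, by simp⟩ ⟨h1.le, h2⟩
  have hrρ : (p.1, p.2 + 1) ∈ ρ := by
    rcases mem_insert.1 (hqideal q (mem_insert_self q ρ) _ hr ⟨h1.le, h2⟩) with h | h
    · exact absurd (congrArg Prod.fst h) h1.ne
    · exact h
  have hne : (p.1, p.2 + 1) ≠ p := fun h => by simpa using congrArg Prod.snd h
  exact notMem_erase p ρ (hp.2.2 _ (mem_erase.2 ⟨hne, hrρ⟩) p hpc ⟨le_rfl, by simp⟩)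

def content (p : ℕ × ℕ) : ℤ := p.2 - p.1

lemma content_mem_Ioo {p : ℕ × ℕ} (hp : p ∈ σ.cells) : content p ∈ Ioo (-(σ.a : ℤ)) σ.b := by
  obtain ⟨h1, h2, h3, h4, -⟩ := mem_cells_iff.1 hp
  rw [mem_Ioo, content]
  omega

lemma le_or_ge_of_content_eq {p q : ℕ × ℕ} (h : content p = content q) : p ≤ q ∨ q ≤ p := by
  simp only [content, Prod.le_def] at h ⊢
  omega

lemma content_ne_of_mem_toggleIns_of_mem_toggleOuts (hρ : σ.IsIdeal ρ) {p q : ℕ × ℕ}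
    (hp : p ∈ σ.toggleIns ρ) (hq : q ∈ σ.toggleOuts ρ) : content p ≠ content q := by
  obtain ⟨hpc, hpin⟩ := mem_filter.1 hp
  obtain ⟨hqc, hqout⟩ := mem_filter.1 hq
  intro h
  rcases le_or_ge_of_content_eq h with hpq | hqp
  · exact hpin.2.1 (hρ.2 q hqout.1 p hpc hpq)
  · have hne : q ≠ p := fun h => hpin.2.1 (h ▸ hqout.1)
    have hlt : q.1 < p.1 ∧ q.2 < p.2 := by
      simp only [content, Prod.le_def, Ne, Prod.ext_iff] at h hqp hne
      omega
    exact not_canToggleIn_of_canToggleOut hqc hqout hlt.1 hlt.2 hpin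

lemma injOn_content_toggleIns_union_toggleOuts (hρ : σ.IsIdeal ρ) :
    Set.InjOn content (σ.toggleIns ρ ∪ σ.toggleOuts ρ : Finset (ℕ × ℕ)) := by
  intro p hp q hq h
  rcases mem_union.1 hp with hp | hp <;> rcases mem_union.1 hq with hq | hq
  · exact isAntichain_toggleIns.eq_of_related hp hq (le_or_ge_of_content_eq h)
  · exact absurd h (content_ne_of_mem_toggleIns_of_mem_toggleOuts hρ hp hq)
  · exact absurd h.symm (content_ne_of_mem_toggleIns_of_mem_toggleOuts hρ hq hp)
  · exact isAntichain_toggleOuts.eq_of_related hp hq (le_or_ge_of_content_eq h)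

lemma jag_le_a_add_b_sub_one (hρ : σ.IsIdeal ρ) : σ.jag ρ ≤ σ.a + σ.b - 1 := by
  have hsub : σ.toggleIns ρ ∪ σ.toggleOuts ρ ⊆ σ.cells :=
    union_subset toggleIns_subset_cells toggleOuts_subset_cells
  have h := card_le_card_of_injOn content (fun p hp => content_mem_Ioo (hsub hp))
    (injOn_content_toggleIns_union_toggleOuts hρ)
  rw [card_union_of_disjoint disjoint_toggleIns_toggleOuts, Int.card_Ioo] at h
  rw [jag_eq_card_add_card]
  omega

lemma canToggleOut_of_maximal (hρ : σ.IsIdeal ρ) {m : ℕ × ℕ} (hm : Maximal (· ∈ ρ) m) :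
    σ.CanToggleOut ρ m := by
  refine ⟨hm.prop, (erase_subset m ρ).trans hρ.1, fun p hp q hq hqp => mem_erase.2 ⟨?_, ?_⟩⟩
  · rintro rfl
    exact (mem_erase.1 hp).1 (le_antisymm (hm.2 (mem_erase.1 hp).2 hqp) hqp)
  · exact hρ.2 p (mem_of_mem_erase hp) q hq hqp

lemma canToggleIn_of_minimal (hρ : σ.IsIdeal ρ) {m : ℕ × ℕ}
    (hm : Minimal (· ∈ σ.cells \ ρ) m) : σ.CanToggleIn ρ m := by
  obtain ⟨hmc, hmρ⟩ := mem_sdiff.1 hm.prop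
  refine ⟨hmc, hmρ, insert_subset hmc hρ.1, fun p hp q hq hqp => ?_⟩
  rcases mem_insert.1 hp with rfl | hp
  · by_cases hqρ : q ∈ ρ
    · exact mem_insert_of_mem hqρ
    · rw [le_antisymm hqp (hm.2 (mem_sdiff.2 ⟨hq, hqρ⟩) hqp)]
      exact mem_insert_self p ρ
  · exact mem_insert_of_mem (hρ.2 p hp q hq hqp)

lemma one_le_jag (hρ : σ.IsIdeal ρ) : 1 ≤ σ.jag ρ := by
  have h : (σ.toggleIns ρ).Nonempty ∨ (σ.toggleOuts ρ).Nonempty := by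
    rcases (σ.cells \ ρ).eq_empty_or_nonempty with hfull | hrest
    · obtain ⟨m, hm⟩ := exists_maximal
        (⟨_, sdiff_eq_empty_iff_subset.1 hfull one_b_mem_cells⟩ : ρ.Nonempty)
      exact Or.inr ⟨m, mem_filter.2 ⟨hρ.1 hm.prop, canToggleOut_of_maximal hρ hm⟩⟩
    · obtain ⟨m, hm⟩ := exists_minimal hrest
      exact Or.inl ⟨m, mem_filter.2 ⟨(mem_sdiff.1 hm.prop).1, canToggleIn_of_minimal hρ hm⟩⟩
  rw [jag_eq_card_add_card]
  rcases h with h | h <;> have := h.card_pos <;> omega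

end SkewShape

lemma Nat.cast_lt_four_mul_mul_div_add {n a b : ℕ} (ha : 1 ≤ a) (hb : 1 ≤ b)
    (hna : n ≤ 2 * a) (hnb : n ≤ 2 * b) (hnab : n ≤ a + b - 1) :
    (n : ℝ) < 4 * a * b / (a + b) := by
  have key : n * (a + b) < 4 * a * b := by
    replace hnab : n + 1 ≤ a + b := by omega
    rcases lt_trichotomy a b with h | rfl | h <;> nlinarith
  rw [lt_div_iff₀ (by positivity)]
  exact_mod_cast key

theorem SkewShape.jag_bounds_general (σ : SkewShape)
    (ρ : Finset (ℕ × ℕ)) (hρ : σ.IsIdeal ρ) :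
    1 ≤ σ.jag ρ ∧
      σ.jag ρ ≤ min (2 * σ.a) (min (2 * σ.b) (σ.a + σ.b - 1)) ∧
      (σ.jag ρ : ℝ) < 4 * (σ.a : ℝ) * (σ.b : ℝ) / ((σ.a : ℝ) + (σ.b : ℝ)) :=
  ⟨one_le_jag hρ, le_min jag_le_two_mul_a (le_min jag_le_two_mul_b (jag_le_a_add_b_sub_one hρ)),
    Nat.cast_lt_four_mul_mul_div_add σ.ha σ.hb jag_le_two_mul_a jag_le_two_mul_b
      (jag_le_a_add_b_sub_one hρ)⟩

/-- inequality from Section 4, Question 3: for a connected skew shape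
`σ` with height `a` and width `b`, the jaggedness of every subshape `ρ ∈ J(σ)` satisfies
`1 ≤ jag(ρ) ≤ min {2a, 2b, a+b−1}`; in particular `jag(ρ) < 4ab/(a+b)`. -/
theorem SkewShape.jag_bounds (σ : SkewShape) (hconn : σ.Connected)
    (ρ : Finset (ℕ × ℕ)) (hρ : σ.IsIdeal ρ) :
    1 ≤ σ.jag ρ ∧
      σ.jag ρ ≤ min (2 * σ.a) (min (2 * σ.b) (σ.a + σ.b - 1)) ∧
      (σ.jag ρ : ℝ) < 4 * (σ.a : ℝ) * (σ.b : ℝ) / ((σ.a : ℝ) + (σ.b : ℝ)) :=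
  SkewShape.jag_bounds_general σ ρ hρ
end
end
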